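/- arXiv:2603.27713 — 7 statements merged into one kernel-verified Lean document; each statement's English description precedes it below -/
import Mathlib

section
/- If a sequence of commuting d-tuples of N×N complex matrices (A_{n,1},...,A_{n,d}) converges (entrywise) to a commuting tuple (A_1,...,A_d), and (λ_1,...,λ_d) is a joint eigenvalue of (A_1,...,A_d) (i.e., there is a nonzero vector v with A_j v = λ_j v for all j), then there exist a strictly increasing sequence n_k of natural numbers and joint eigenvalues (λ_{n_k,1},...,λ_{n_k,d}) of (A_{n_k,1},...,A_{n_k,d}) with λ_{n_k,j} → λ_j as k → ∞ for each j. -/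
/-!
Choose `c` so that `χ ↦ c ⬝ᵥ χ` separates `lam` from the finitely many other joint eigenvalues
of `B`. Then `c ⬝ᵥ lam` is an eigenvalue of `∑ j, c j • B j`, so it is approximated by
eigenvalues of `∑ j, c j • A n j`: the roots of a characteristic polynomial cannot all stay
away from a point where its value is small, as `|det (z - M)| = ∏ |z - rᵢ|`. Since the `A n j`
commute, each eigenvalue of `∑ j, c j • A n j` is `c ⬝ᵥ χ` for a joint eigenvalue `χ` of `A n`.
These `χ` are bounded by the entries of `A n`, so a subsequence converges; the limit is a joint
eigenvalue of `B` because the graph of the joint spectrum is closed, and it has the same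
`c`-value as `lam`, hence equals `lam`.
-/

open Matrix Filter Topology

namespace Module.End

theorem exists_common_eigenvector_of_commute {K V ι : Type*} [Field K] [IsAlgClosed K]
    [AddCommGroup V] [Module K V] [FiniteDimensional K V] [Nontrivial V]
    (f : ι → End K V) (hf : ∀ i j, Commute (f i) (f j)) :
    ∃ (χ : ι → K) (v : V), v ≠ 0 ∧ ∀ i, f i v = χ i • v := by
  induction hn : Module.finrank K V using Nat.strong_induction_on generalizing V with
  | _ n ih =>
  by_cases hscalar : ∀ i, ∃ μ, eigenspace (f i) μ = ⊤
  · choose χ hχ using hscalar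
    obtain ⟨v, hv⟩ := exists_ne (0 : V)
    exact ⟨χ, v, hv, fun i => mem_eigenspace_iff.mp (hχ i ▸ Submodule.mem_top)⟩
  · push Not at hscalar
    obtain ⟨i, hi⟩ := hscalar
    obtain ⟨μ, hμ⟩ := exists_eigenvalue (f i)
    let E := eigenspace (f i) μ
    have hmaps (j : ι) : Set.MapsTo (f j) E E := mapsTo_genEigenspace_of_comm (hf i j) μ 1
    have : Nontrivial E := Submodule.nontrivial_iff_ne_bot.mpr hμ
    obtain ⟨χ, v, hv, hχ⟩ := ih _ (hn ▸ Submodule.finrank_lt (hi μ))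
      (fun j => (f j).restrict (hmaps j))
      (fun j k => LinearMap.restrict_commute (hf j k) _ _) rfl
    exact ⟨χ, v, by simpa using hv, fun j => congrArg Subtype.val (hχ j)⟩

end Module.End

theorem exists_dotProduct_eq_imp_eq {ι K : Type*} [Fintype ι] [Field K] [Infinite K]
    {F : Set (ι → K)} (hF : F.Finite) (x : ι → K) :
    ∃ c : ι → K, ∀ y ∈ F, c ⬝ᵥ y = c ⬝ᵥ x → y = x := by
  classical
  have : Finite {y // y ∈ F ∧ y ≠ x} := (hF.subset fun _ h => h.1).to_subtype
  obtain ⟨f, hf⟩ := Module.exists_dual_forall_apply_ne_zero (K := K)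
    (fun y : {y // y ∈ F ∧ y ≠ x} => y.1 - x) fun y => sub_ne_zero.mpr y.2.2
  set c := (dotProductEquiv K ι).symm f
  have hfc (z : ι → K) : f z = c ⬝ᵥ z := by
    rw [← LinearEquiv.apply_symm_apply (dotProductEquiv K ι) f, dotProductEquiv_apply_apply]
  refine ⟨c, fun y hy hxy => by_contra fun hne => hf ⟨y, hy, hne⟩ ?_⟩
  rw [hfc, dotProduct_sub, hxy, sub_self]

namespace Matrix

variable {ι n : Type*} [Fintype n]

def IsJointEigenvalue {K : Type*} [CommRing K] (A : ι → Matrix n n K) (χ : ι → K) : Prop :=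
  ∃ v : n → K, v ≠ 0 ∧ ∀ j, A j *ᵥ v = χ j • v

theorem sum_smul_mulVec_of_forall_mulVec_eq_smul {K : Type*} [CommRing K] [Fintype ι]
    {A : ι → Matrix n n K} {χ : ι → K} {v : n → K} (hv : ∀ j, A j *ᵥ v = χ j • v)
    (c : ι → K) : (∑ j, c j • A j) *ᵥ v = (c ⬝ᵥ χ) • v := by
  simp [sum_mulVec, smul_mulVec, hv, dotProduct, Finset.sum_smul, smul_smul]

theorem norm_le_sum_norm_of_mulVec_eq_smul {𝕜 : Type*} [NormedField 𝕜] {M : Matrix n n 𝕜}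
    {r : 𝕜} {v : n → 𝕜} (hv : M *ᵥ v = r • v) (hv0 : v ≠ 0) :
    ‖r‖ ≤ ∑ i, ∑ k, ‖M i k‖ := by
  obtain ⟨i₀, -⟩ := Function.ne_iff.mp hv0
  obtain ⟨i, -, hi⟩ := Finset.exists_max_image Finset.univ (fun k => ‖v k‖) ⟨i₀, Finset.mem_univ _⟩
  have hvi : 0 < ‖v i‖ := by
    by_contra! h
    exact hv0 (funext fun k => norm_le_zero_iff.mp ((hi k (Finset.mem_univ k)).trans h))
  have hrow : ‖r‖ * ‖v i‖ ≤ (∑ k, ‖M i k‖) * ‖v i‖ :=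
    calc ‖r‖ * ‖v i‖ = ‖∑ k, M i k * v k‖ := by
          rw [← norm_mul, ← smul_eq_mul, ← Pi.smul_apply, ← hv]; rfl
      _ ≤ ∑ k, ‖M i k‖ * ‖v k‖ := norm_sum_le_of_le _ fun k _ => (norm_mul _ _).le
      _ ≤ (∑ k, ‖M i k‖) * ‖v i‖ := by
          rw [Finset.sum_mul]
          exact Finset.sum_le_sum fun k _ =>
            mul_le_mul_of_nonneg_left (hi k (Finset.mem_univ k)) (norm_nonneg _)
  exact (le_of_mul_le_mul_right hrow hvi).trans (Finset.single_le_sum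
    (f := fun i => ∑ k, ‖M i k‖) (fun _ _ => Finset.sum_nonneg fun _ _ => norm_nonneg _)
    (Finset.mem_univ i))

section Field

variable [DecidableEq n] {K : Type*} [Field K]

theorem mem_spectrum_of_mulVec_eq_smul {M : Matrix n n K} {r : K} {v : n → K}
    (hv : M *ᵥ v = r • v) (hv0 : v ≠ 0) : r ∈ spectrum K M := by
  rw [← spectrum_toLin', ← Module.End.hasEigenvalue_iff_mem_spectrum]
  exact Module.End.hasEigenvalue_of_hasEigenvector
    ⟨Module.End.mem_eigenspace_iff.mpr (by simpa using hv), hv0⟩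

theorem IsJointEigenvalue.dotProduct_mem_spectrum [Fintype ι] {A : ι → Matrix n n K}
    {χ : ι → K} (h : IsJointEigenvalue A χ) (c : ι → K) :
    c ⬝ᵥ χ ∈ spectrum K (∑ j, c j • A j) :=
  let ⟨_, hv0, hv⟩ := h
  mem_spectrum_of_mulVec_eq_smul (sum_smul_mulVec_of_forall_mulVec_eq_smul hv c) hv0

theorem finite_setOf_isJointEigenvalue [Finite ι] (A : ι → Matrix n n K) :
    {χ | IsJointEigenvalue A χ}.Finite :=
  (Set.Finite.pi fun j => (A j).finite_spectrum).subset
    fun _ ⟨_, hv0, hv⟩ j _ => mem_spectrum_of_mulVec_eq_smul (hv j) hv0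

theorem exists_isJointEigenvalue_dotProduct_eq [Fintype ι] [IsAlgClosed K]
    {A : ι → Matrix n n K} (hA : ∀ i j, Commute (A i) (A j)) {c : ι → K} {r : K}
    (hr : r ∈ spectrum K (∑ j, c j • A j)) :
    ∃ χ, IsJointEigenvalue A χ ∧ c ⬝ᵥ χ = r := by
  rw [← spectrum_toLin', ← Module.End.hasEigenvalue_iff_mem_spectrum] at hr
  let E := Module.End.eigenspace (toLin' (∑ j, c j • A j)) r
  have : Nontrivial E := Submodule.nontrivial_iff_ne_bot.mpr hr
  have hcomm (i j : ι) : Commute (toLin' (A i)) (toLin' (A j)) :=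
    (hA i j).map (toLinAlgEquiv' : Matrix n n K ≃ₐ[K] _)
  have hmaps (j : ι) : Set.MapsTo (toLin' (A j)) E E :=
    Module.End.mapsTo_genEigenspace_of_comm
      ((Commute.sum_left _ _ _ fun i _ => (hA i j).smul_left (c i)).map
        (toLinAlgEquiv' : Matrix n n K ≃ₐ[K] _)) r 1
  obtain ⟨χ, w, hw0, hw⟩ := Module.End.exists_common_eigenvector_of_commute
    (fun j => (toLin' (A j)).restrict (hmaps j))
    (fun i j => LinearMap.restrict_commute (hcomm i j) _ _)
  have hwv (j : ι) : A j *ᵥ (w : n → K) = χ j • (w : n → K) := congrArg Subtype.val (hw j)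
  have hw0' : (w : n → K) ≠ 0 := by simpa using hw0
  refine ⟨χ, ⟨w, hw0', hwv⟩, smul_left_injective K hw0' ?_⟩
  change (c ⬝ᵥ χ) • (w : n → K) = r • (w : n → K)
  rw [← sum_smul_mulVec_of_forall_mulVec_eq_smul hwv c, ← toLin'_apply]
  exact Module.End.mem_eigenspace_iff.mp w.2

end Field

section IsAlgClosed

variable [DecidableEq n] {𝕜 : Type*} [NormedField 𝕜] [IsAlgClosed 𝕜]

theorem exists_mem_spectrum_norm_sub_lt_of_norm_eval_charpoly_lt (M : Matrix n n 𝕜) {z : 𝕜}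
    {ε : ℝ} (hε : 0 ≤ ε) (h : ‖M.charpoly.eval z‖ < ε ^ Fintype.card n) :
    ∃ r ∈ spectrum 𝕜 M, ‖z - r‖ < ε := by
  by_contra! hfar
  refine h.not_ge ?_
  calc ε ^ Fintype.card n = (M.charpoly.roots.map fun _ => ε).prod := by
        rw [Multiset.map_const', Multiset.prod_replicate, IsAlgClosed.card_roots_eq_natDegree,
          charpoly_natDegree_eq_dim]
    _ ≤ (M.charpoly.roots.map fun r => ‖z - r‖).prod :=
        Multiset.prod_map_le_prod_map₀ _ _ (fun _ _ => hε) fun r hr =>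
          hfar r (mem_spectrum_iff_isRoot_charpoly.mpr (Polynomial.isRoot_of_mem_roots hr))
    _ = ‖M.charpoly.eval z‖ := by
        rw [(IsAlgClosed.splits M.charpoly).eval_eq_prod_roots_of_monic M.charpoly_monic,
          ← normHom_apply, map_multiset_prod, Multiset.map_map]
        rfl

theorem eventually_exists_mem_spectrum_norm_sub_lt {α : Type*} {l : Filter α}
    {M : α → Matrix n n 𝕜} {M₀ : Matrix n n 𝕜} (hM : Tendsto M l (𝓝 M₀)) {z : 𝕜}
    (hz : z ∈ spectrum 𝕜 M₀) {ε : ℝ} (hε : 0 < ε) :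
    ∀ᶠ a in l, ∃ r ∈ spectrum 𝕜 (M a), ‖z - r‖ < ε := by
  have hcont : Continuous fun N : Matrix n n 𝕜 => N.charpoly.eval z := by
    simp_rw [eval_charpoly]
    fun_prop
  have hlim : Tendsto (fun a => (M a).charpoly.eval z) l (𝓝 0) := by
    rw [← (mem_spectrum_iff_isRoot_charpoly.mp hz).eq_zero]
    exact hcont.continuousAt.tendsto.comp hM
  filter_upwards [(tendsto_zero_iff_norm_tendsto_zero.mp hlim).eventually
    (gt_mem_nhds (pow_pos hε _))] with a ha
  exact exists_mem_spectrum_norm_sub_lt_of_norm_eval_charpoly_lt _ hε.le ha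

end IsAlgClosed

section RCLike

variable {𝕜 : Type*} [RCLike 𝕜]

theorem isClosed_setOf_isJointEigenvalue :
    IsClosed {p : (ι → Matrix n n 𝕜) × (ι → 𝕜) | IsJointEigenvalue p.1 p.2} := by
  have hsphere : {p : (ι → Matrix n n 𝕜) × (ι → 𝕜) | IsJointEigenvalue p.1 p.2} =
      Prod.fst '' {q : ((ι → Matrix n n 𝕜) × (ι → 𝕜)) × Metric.sphere (0 : n → 𝕜) 1 |
        ∀ j, q.1.1 j *ᵥ (q.2 : n → 𝕜) = q.1.2 j • (q.2 : n → 𝕜)} := by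
    ext ⟨A, χ⟩
    constructor
    · rintro ⟨v, hv0, hv⟩
      refine ⟨((A, χ), ⟨(‖v‖⁻¹ : 𝕜) • v, by simp [norm_smul, hv0]⟩), fun j => ?_, rfl⟩
      rw [mulVec_smul, hv j, smul_comm]
    · rintro ⟨⟨_, v⟩, hv, rfl⟩
      exact ⟨v, ne_zero_of_mem_unit_sphere v, hv⟩
  rw [hsphere, Set.ofPred_forall]
  exact isClosedMap_fst_of_compactSpace _ (isClosed_iInter fun j => isClosed_eq
    (by fun_prop) (by fun_prop))

theorem IsJointEigenvalue.norm_le [Fintype ι] {A : ι → Matrix n n 𝕜} {χ : ι → 𝕜}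
    (h : IsJointEigenvalue A χ) : ‖χ‖ ≤ ∑ j, ∑ i, ∑ k, ‖A j i k‖ := by
  obtain ⟨v, hv0, hv⟩ := h
  refine (pi_norm_le_iff_of_nonneg (by positivity)).mpr fun j => ?_
  exact (norm_le_sum_norm_of_mulVec_eq_smul (hv j) hv0).trans (Finset.single_le_sum
    (f := fun j => ∑ i, ∑ k, ‖A j i k‖) (fun _ _ => by positivity) (Finset.mem_univ j))

theorem exists_isJointEigenvalue_tendsto_subseq [Fintype ι] {A : ℕ → ι → Matrix n n 𝕜}
    {B : ι → Matrix n n 𝕜} (hA : Tendsto A atTop (𝓝 B)) {χ : ℕ → ι → 𝕜}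
    (hχ : ∀ k, IsJointEigenvalue (A k) (χ k)) :
    ∃ χ₀, IsJointEigenvalue B χ₀ ∧ ∃ ψ : ℕ → ℕ, StrictMono ψ ∧ Tendsto (χ ∘ ψ) atTop (𝓝 χ₀) := by
  obtain ⟨C, hC⟩ : BddAbove (Set.range fun k => ∑ j, ∑ i, ∑ l, ‖A k j i l‖) :=
    Tendsto.bddAbove_range ((by fun_prop : Continuous fun A : ι → Matrix n n 𝕜 =>
      ∑ j, ∑ i, ∑ l, ‖A j i l‖).continuousAt.tendsto.comp hA)
  have hbdd : Bornology.IsBounded (Set.range χ) :=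
    isBounded_iff_forall_norm_le.mpr ⟨C, by
      rintro _ ⟨k, rfl⟩
      exact (hχ k).norm_le.trans (hC ⟨k, rfl⟩)⟩
  obtain ⟨χ₀, -, ψ, hψ, hlim⟩ := tendsto_subseq_of_bounded hbdd (Set.mem_range_self (f := χ))
  exact ⟨χ₀, isClosed_setOf_isJointEigenvalue.mem_of_tendsto
    ((hA.comp hψ.tendsto_atTop).prodMk_nhds hlim) (Eventually.of_forall fun k => hχ (ψ k)),
    ψ, hψ, hlim⟩

end RCLike

end Matrix

theorem stmt_0_general (d N : ℕ)
    (A : ℕ → Fin d → Matrix (Fin N) (Fin N) ℂ)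
    (B : Fin d → Matrix (Fin N) (Fin N) ℂ)
    (hAcomm : ∀ n i j, Commute (A n i) (A n j))
    (hconv : ∀ j i₁ i₂, Tendsto (fun n => A n j i₁ i₂) atTop (𝓝 (B j i₁ i₂)))
    (lam : Fin d → ℂ)
    (hlam : ∃ v : Fin N → ℂ, v ≠ 0 ∧ ∀ j, B j *ᵥ v = lam j • v) :
    ∃ n : ℕ → ℕ, StrictMono n ∧
      ∃ mu : ℕ → Fin d → ℂ,
        (∀ k, ∃ v : Fin N → ℂ, v ≠ 0 ∧ ∀ j, A (n k) j *ᵥ v = mu k j • v) ∧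
        ∀ j, Tendsto (fun k => mu k j) atTop (𝓝 (lam j)) := by
  have hAB : Tendsto A atTop (𝓝 B) :=
    tendsto_pi_nhds.mpr fun j => tendsto_pi_nhds.mpr fun i => tendsto_pi_nhds.mpr (hconv j i)
  obtain ⟨c, hc⟩ := exists_dotProduct_eq_imp_eq (finite_setOf_isJointEigenvalue B) lam
  have hC : Tendsto (fun n => ∑ j, c j • A n j) atTop (𝓝 (∑ j, c j • B j)) :=
    tendsto_finsetSum _ fun j _ => (tendsto_pi_nhds.mp hAB j).const_smul (c j)
  have hnear (k : ℕ) : ∀ᶠ n in atTop,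
      ∃ χ, IsJointEigenvalue (A n) χ ∧ ‖c ⬝ᵥ lam - c ⬝ᵥ χ‖ < 1 / (k + 1) := by
    filter_upwards [eventually_exists_mem_spectrum_norm_sub_lt hC
      (IsJointEigenvalue.dotProduct_mem_spectrum hlam c) (Nat.one_div_pos_of_nat (n := k))]
      with n ⟨r, hr, hrlam⟩
    obtain ⟨χ, hχ, rfl⟩ := exists_isJointEigenvalue_dotProduct_eq (hAcomm n) hr
    exact ⟨χ, hχ, hrlam⟩
  obtain ⟨φ, hφ, hφnear⟩ := extraction_forall_of_eventually hnear
  choose χ hχ hχlam using hφnear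
  have hcχ : Tendsto (fun k => c ⬝ᵥ χ k) atTop (𝓝 (c ⬝ᵥ lam)) :=
    tendsto_iff_norm_sub_tendsto_zero.mpr <| squeeze_zero (fun _ => norm_nonneg _)
      (fun k => (norm_sub_rev _ _).trans_le (hχlam k).le) tendsto_one_div_add_atTop_nhds_zero_nat
  obtain ⟨χ₀, hχ₀, ψ, hψ, hlim⟩ :=
    exists_isJointEigenvalue_tendsto_subseq (hAB.comp hφ.tendsto_atTop) hχ
  obtain rfl : χ₀ = lam := hc χ₀ hχ₀ <| tendsto_nhds_unique
    (((continuous_const.dotProduct continuous_id).tendsto χ₀).comp hlim)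
    (hcχ.comp hψ.tendsto_atTop)
  exact ⟨φ ∘ ψ, hφ.comp hψ, χ ∘ ψ, fun k => hχ (ψ k), tendsto_pi_nhds.mp hlim⟩

/-- Continuity of joint eigenvalues for converging sequences of commuting
matrix tuples. -/
theorem stmt_0 (d N : ℕ)
    (A : ℕ → Fin d → Matrix (Fin N) (Fin N) ℂ)
    (B : Fin d → Matrix (Fin N) (Fin N) ℂ)
    (hAcomm : ∀ n i j, Commute (A n i) (A n j))
    (hBcomm : ∀ i j, Commute (B i) (B j))
    (hconv : ∀ j i₁ i₂, Tendsto (fun n => A n j i₁ i₂) atTop (𝓝 (B j i₁ i₂)))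
    (lam : Fin d → ℂ)
    (hlam : ∃ v : Fin N → ℂ, v ≠ 0 ∧ ∀ j, B j *ᵥ v = lam j • v) :
    ∃ n : ℕ → ℕ, StrictMono n ∧
      ∃ mu : ℕ → Fin d → ℂ,
        (∀ k, ∃ v : Fin N → ℂ, v ≠ 0 ∧ ∀ j, A (n k) j *ᵥ v = mu k j • v) ∧
        ∀ j, Tendsto (fun k => mu k j) atTop (𝓝 (lam j)) :=
  stmt_0_general d N A B hAcomm hconv lam hlam
end

section
/- Let (A_1,...,A_d) be a commuting tuple of N×N complex matrices. If det(α_1 A_1 + α_2 A_2 + ... + α_d A_d) = 0 for every α = (α_1,...,α_d) ∈ ℂ^d, then (0,0,...,0) is a joint eigenvalue of (A_1,...,A_d), i.e., there is a nonzero vector v with A_j v = 0 for all j. -/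
/-!
Split `ℂᴺ` into the joint generalised eigenspaces `W χ` of the commuting tuple; only finitely
many of them are nonzero. If `W 0 = 0`, pick `α` with `∑ αⱼ χⱼ ≠ 0` for each of these finitely
many `χ`, i.e. avoid finitely many hyperplanes of `ℂᵈ`. On `W χ` the matrix `B = ∑ αⱼ Aⱼ` has the
single generalised eigenvalue `∑ αⱼ χⱼ`, so `0` is not an eigenvalue of `B` and `det B ≠ 0`.
Hence `W 0 ≠ 0`. On `W 0` the `Aⱼ` are commuting nilpotents, and a common kernel vector is found
by treating them one at a time: replace the current vector by the last nonzero vector of its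
`Aⱼ`-orbit, which stays in the joint kernel of the previous ones by commutativity.
-/

lemma exists_forall_sum_mul_ne_zero {ι K : Type*} [Fintype ι] [Field K] [Infinite K]
    (T : Finset (ι → K)) (hT : 0 ∉ T) :
    ∃ α : ι → K, ∀ χ ∈ T, ∑ j, α j * χ j ≠ 0 := by
  classical
  have hker : ∀ χ : T, LinearMap.ker (Fintype.linearCombination K (χ : ι → K)) ≠ ⊤ := by
    intro χ hχ_top
    obtain ⟨j, hj⟩ := Function.ne_iff.mp (ne_of_mem_of_not_mem χ.2 hT)
    have := LinearMap.congr_fun (LinearMap.ker_eq_top.mp hχ_top) (Pi.single j 1)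
    simp only [Fintype.linearCombination_apply_single, one_smul, LinearMap.zero_apply] at this
    exact hj this
  obtain ⟨α, -, hα⟩ := Set.exists_of_ssubset <|
    Submodule.iUnion_ssubset_of_forall_ne_top_of_card_lt Finset.univ _ hker (by simp)
  refine ⟨α, fun χ hχ hχα => hα ?_⟩
  simp only [Finset.mem_univ, Set.iUnion_true, Set.mem_iUnion, SetLike.mem_coe, LinearMap.mem_ker]
  exact ⟨⟨χ, hχ⟩, by simpa [Fintype.linearCombination_apply, mul_comm] using hχα⟩

namespace Module.End

variable {ι R M : Type*} [CommRing R] [AddCommGroup M] [Module R M]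

lemma iInf_maxGenEigenspace_le_maxGenEigenspace_sum (f : ι → End R M)
    (hf : ∀ i j, Commute (f i) (f j)) (χ α : ι → R) (s : Finset ι) :
    ⨅ j, (f j).maxGenEigenspace (χ j) ≤
      (∑ j ∈ s, α j • f j).maxGenEigenspace (∑ j ∈ s, α j * χ j) := by
  classical
  induction s using Finset.induction_on with
  | empty =>
    intro v _
    exact (mem_maxGenEigenspace _ _ _).mpr ⟨1, by simp⟩
  | insert i s hi ih =>
    rw [Finset.sum_insert hi, Finset.sum_insert hi]
    refine le_trans (le_inf ((iInf_le _ i).trans (genEigenspace_le_smul _ _ (α i) ⊤)) ih) ?_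
    exact genEigenspace_inf_le_add _ _ _ _ ⊤ ⊤
      (Commute.sum_right _ _ _ fun j _ => ((hf i j).smul_right _).smul_left _)

lemma exists_pow_apply_ne_zero_and_apply_eq_zero (f : End R M) {v : M} (hv : v ≠ 0)
    {m : ℕ} (hm : (f ^ m) v = 0) : ∃ k, (f ^ k) v ≠ 0 ∧ f ((f ^ k) v) = 0 := by
  induction m with
  | zero => exact absurd hm hv
  | succ m ih =>
    by_cases h : (f ^ m) v = 0
    · exact ih h
    · exact ⟨m, h, by rwa [← mul_apply, ← pow_succ']⟩

lemma exists_ne_zero_forall_apply_eq_zero [Fintype ι] (f : ι → End R M)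
    (hf : ∀ i j, Commute (f i) (f j)) (h : ⨅ j, (f j).maxGenEigenspace 0 ≠ ⊥) :
    ∃ v ≠ 0, ∀ j, f j v = 0 := by
  classical
  set W := ⨅ j, (f j).maxGenEigenspace 0
  suffices ∀ s : Finset ι, ∃ v ∈ W, v ≠ 0 ∧ ∀ j ∈ s, f j v = 0 by
    obtain ⟨v, -, hv0, hv⟩ := this Finset.univ
    exact ⟨v, hv0, fun j => hv j (Finset.mem_univ j)⟩
  intro s
  induction s using Finset.induction_on with
  | empty =>
    obtain ⟨v, hvW, hv0⟩ := Submodule.exists_mem_ne_zero_of_ne_bot h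
    exact ⟨v, hvW, hv0, by simp⟩
  | insert i s _ ih =>
    obtain ⟨v, hvW, hv0, hvs⟩ := ih
    obtain ⟨m, hm⟩ := (mem_maxGenEigenspace _ _ _).mp ((Submodule.mem_iInf _).mp hvW i)
    obtain ⟨k, hk0, hk⟩ :=
      exists_pow_apply_ne_zero_and_apply_eq_zero (f i) hv0 (by simpa using hm)
    refine ⟨(f i ^ k) v, ?_, hk0, Finset.forall_mem_insert _ _ _ |>.mpr ⟨hk, fun j hj => ?_⟩⟩
    · exact (Submodule.mem_iInf _).mpr fun j => mapsTo_maxGenEigenspace_of_comm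
        ((hf j i).pow_right k) 0 ((Submodule.mem_iInf _).mp hvW j)
    · rw [← mul_apply, ((hf j i).pow_right k).eq, mul_apply, hvs j hj, map_zero]

lemma iInf_maxGenEigenspace_zero_ne_bot {K V : Type*} [Fintype ι] [Field K] [IsAlgClosed K]
    [AddCommGroup V] [Module K V] [FiniteDimensional K V] (f : ι → End K V)
    (hf : ∀ i j, Commute (f i) (f j)) (hker : ∀ α : ι → K, ∃ v ≠ 0, (∑ j, α j • f j) v = 0) :
    ⨅ j, (f j).maxGenEigenspace 0 ≠ ⊥ := by
  classical
  set W : (ι → K) → Submodule K V := fun χ => ⨅ j, (f j).maxGenEigenspace (χ j)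
  intro hW0
  have hfin : {χ | W χ ≠ ⊥}.Finite := Submodule.finite_ne_bot_of_iSupIndep <|
    independent_iInf_maxGenEigenspace_of_forall_mapsTo f fun i j μ =>
      mapsTo_maxGenEigenspace_of_comm (hf j i) μ
  obtain ⟨α, hα⟩ := exists_forall_sum_mul_ne_zero hfin.toFinset (by simpa [W] using hW0)
  obtain ⟨v, hv0, hv⟩ := hker α
  set B := ∑ j, α j • f j
  have htop : ⨆ χ, W χ = ⊤ :=
    iSup_iInf_maxGenEigenspace_eq_top_of_iSup_maxGenEigenspace_eq_top_of_commute f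
      (fun i j _ => hf i j) fun i => iSup_maxGenEigenspace_eq_top (f i)
  have hle : ⨆ χ, W χ ≤ ⨆ μ, ⨆ _ : μ ≠ 0, B.maxGenEigenspace μ := iSup_le fun χ => by
    rcases eq_or_ne (W χ) ⊥ with hχ | hχ
    · simp [hχ]
    · exact (iInf_maxGenEigenspace_le_maxGenEigenspace_sum f hf χ α _).trans
        (le_iSup₂_of_le _ (hα χ (by simpa using hχ)) le_rfl)
  have hvB : v ∈ B.maxGenEigenspace 0 := (mem_maxGenEigenspace _ _ _).mpr ⟨1, by simpa⟩
  exact hv0 ((independent_maxGenEigenspace B 0).le_bot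
    ⟨hvB, hle (htop ▸ Submodule.mem_top)⟩)

end Module.End

open Matrix Module End

/-- If `det (∑ αⱼ Aⱼ) = 0` for every `α ∈ ℂᵈ`, then `(0,…,0)` is a joint
eigenvalue of the commuting tuple `(A₁,…,A_d)`. -/
theorem stmt_1 (d N : ℕ)
    (A : Fin d → Matrix (Fin N) (Fin N) ℂ)
    (hcomm : ∀ i j, Commute (A i) (A j))
    (hdet : ∀ α : Fin d → ℂ, (∑ j, α j • A j).det = 0) :
    ∃ v : Fin N → ℂ, v ≠ 0 ∧ ∀ j, A j *ᵥ v = 0 := by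
  set f : Fin d → End ℂ (Fin N → ℂ) := fun j => toLinAlgEquiv' (A j)
  have hf : ∀ i j, Commute (f i) (f j) := fun i j => (hcomm i j).map toLinAlgEquiv'
  have hker (α : Fin d → ℂ) : ∃ v ≠ 0, (∑ j, α j • f j) v = 0 := by
    obtain ⟨v, hv0, hv⟩ := exists_mulVec_eq_zero_iff.mpr (hdet α)
    refine ⟨v, hv0, ?_⟩
    simpa [f, ← map_smul, ← map_sum, toLinAlgEquiv'_apply] using hv
  obtain ⟨v, hv0, hv⟩ := exists_ne_zero_forall_apply_eq_zero f hf
    (iInf_maxGenEigenspace_zero_ne_bot f hf hker)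
  exact ⟨v, hv0, fun j => by simpa [f, toLinAlgEquiv'_apply] using hv j⟩
end

section
/- Let (A_1,...,A_d) be a commuting tuple of N×N complex matrices, and let S ⊆ ℂ^d be a finite set with |S| ≥ N(d−1)+1 such that every subset of S of cardinality d is linearly independent. If det(α_1 A_1 + ... + α_d A_d) = 0 for all (α_1,...,α_d) ∈ S, then (0,...,0) is a joint eigenvalue of (A_1,...,A_d). -/
/-!
A commuting family has at most `N` joint eigenvalues on `ℂ^N`, since its joint eigenspaces are
independent. If `det (∑ αⱼ Aⱼ) = 0`, the kernel of `∑ αⱼ Aⱼ` is invariant under every `Aⱼ`, so it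
contains a common eigenvector; its joint eigenvalue `χ` satisfies `α ⬝ᵥ χ = 0`. By pigeonhole some
joint eigenvalue is orthogonal to `d` elements of `S`; these span `ℂ^d`, so that eigenvalue is `0`.
-/

open Matrix Finset

namespace Module.End

variable {ι K V : Type*} [Field K] [AddCommGroup V] [Module K V]

def jointEigenspace (f : ι → End K V) (χ : ι → K) : Submodule K V :=
  ⨅ i, (f i).eigenspace (χ i)

@[simp]
theorem mem_jointEigenspace_iff {f : ι → End K V} {χ : ι → K} {v : V} :
    v ∈ jointEigenspace f χ ↔ ∀ i, f i v = χ i • v := by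
  simp [jointEigenspace]

def jointEigenvalues (f : ι → End K V) : Set (ι → K) :=
  {χ | jointEigenspace f χ ≠ ⊥}

theorem iSupIndep_jointEigenspace {f : ι → End K V} (hf : ∀ i j, Commute (f i) (f j)) :
    iSupIndep (jointEigenspace f) :=
  (independent_iInf_maxGenEigenspace_of_forall_mapsTo f
    fun i j φ ↦ mapsTo_maxGenEigenspace_of_comm (hf j i) φ).mono
    fun _ ↦ iInf_mono fun _ ↦ eigenspace_le_maxGenEigenspace

variable [FiniteDimensional K V]

theorem finite_jointEigenvalues {f : ι → End K V} (hf : ∀ i j, Commute (f i) (f j)) :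
    (jointEigenvalues f).Finite :=
  Set.finite_def.mpr ⟨(iSupIndep_jointEigenspace hf).fintypeNeBotOfFiniteDimensional⟩

theorem ncard_jointEigenvalues_le {f : ι → End K V} (hf : ∀ i j, Commute (f i) (f j)) :
    (jointEigenvalues f).ncard ≤ finrank K V := by
  have := (iSupIndep_jointEigenspace hf).fintypeNeBotOfFiniteDimensional
  rw [← Nat.card_coe_set_eq]
  exact (Nat.card_eq_fintype_card (α := {χ // jointEigenspace f χ ≠ ⊥})).trans_le
    (iSupIndep_jointEigenspace hf).subtype_ne_bot_le_finrank

/-- A minimal nonzero subspace invariant under all `f i` must be an eigenspace of each of them,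
since the eigenspaces of `f i` are invariant under the `f j`. -/
theorem jointEigenvalues_nonempty [IsAlgClosed K] [Nontrivial V] {f : ι → End K V}
    (hf : ∀ i j, Commute (f i) (f j)) : (jointEigenvalues f).Nonempty := by
  obtain ⟨W, ⟨hW, hWf⟩, hmin⟩ := wellFounded_lt.has_min
    {W : Submodule K V | W ≠ ⊥ ∧ ∀ i, Set.MapsTo (f i) W W}
    ⟨⊤, top_ne_bot, fun _ _ _ ↦ Submodule.mem_top⟩
  have : Nontrivial W := Submodule.nontrivial_iff_ne_bot.mpr hW
  have hscalar : ∀ i, ∃ μ, W ≤ (f i).eigenspace μ := by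
    intro i
    obtain ⟨μ, hμ⟩ := exists_eigenvalue ((f i).restrict (hWf i))
    obtain ⟨w, hw⟩ := hμ.exists_hasEigenvector
    refine ⟨μ, inf_eq_left.mp (by_contra fun hne ↦ ?_)⟩
    refine hmin (W ⊓ (f i).eigenspace μ) ⟨?_, fun j ↦ ?_⟩ (inf_le_left.lt_of_ne hne)
    · refine Submodule.ne_bot_iff _ |>.mpr ⟨w, ⟨w.2, ?_⟩, by simpa using hw.2⟩
      exact mem_eigenspace_iff.mpr (congr_arg Subtype.val hw.apply_eq_smul)
    · rw [Submodule.coe_inf]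
      exact (hWf j).inter_inter (mapsTo_genEigenspace_of_comm (hf i j) μ 1)
  choose μ hμ using hscalar
  obtain ⟨w, hw, hw0⟩ := Submodule.ne_bot_iff _ |>.mp hW
  exact ⟨μ, Submodule.ne_bot_iff _ |>.mpr
    ⟨w, mem_jointEigenspace_iff.mpr fun i ↦ mem_eigenspace_iff.mp (hμ i hw), hw0⟩⟩

theorem exists_mem_jointEigenvalues_dotProduct_eq_zero [IsAlgClosed K] [Fintype ι]
    {f : ι → End K V} (hf : ∀ i j, Commute (f i) (f j)) {α : ι → K}
    (hα : LinearMap.ker (∑ i, α i • f i) ≠ ⊥) :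
    ∃ χ ∈ jointEigenvalues f, α ⬝ᵥ χ = 0 := by
  set g := ∑ i, α i • f i
  have hmaps : ∀ i, Set.MapsTo (f i) (LinearMap.ker g) (LinearMap.ker g) := by
    intro i x hx
    have hcomm : Commute g (f i) :=
      Commute.sum_left _ _ _ fun j _ ↦ (hf j i).smul_left (α j)
    simp only [SetLike.mem_coe, LinearMap.mem_ker] at hx ⊢
    rw [← mul_apply, hcomm.eq, mul_apply, hx, map_zero]
  have : Nontrivial (LinearMap.ker g) := Submodule.nontrivial_iff_ne_bot.mpr hα
  obtain ⟨χ, hχ⟩ := jointEigenvalues_nonempty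
    (f := fun i ↦ (f i).restrict (hmaps i)) fun i j ↦ LinearMap.restrict_commute (hf i j) _ _
  obtain ⟨w, hw, hw0⟩ := Submodule.ne_bot_iff _ |>.mp hχ
  have hfw : ∀ i, f i w = χ i • w := fun i ↦
    congr_arg Subtype.val (mem_jointEigenspace_iff.mp hw i)
  have hw0' : (w : V) ≠ 0 := by simpa using hw0
  refine ⟨χ, Submodule.ne_bot_iff _ |>.mpr ⟨w, mem_jointEigenspace_iff.mpr hfw, hw0'⟩, ?_⟩
  have : (α ⬝ᵥ χ) • (w : V) = 0 := calc
    (α ⬝ᵥ χ) • (w : V) = ∑ i, α i • f i w := by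
      simp only [dotProduct, Finset.sum_smul, hfw, smul_smul]
    _ = g w := by simp only [g, LinearMap.sum_apply, LinearMap.smul_apply]
    _ = 0 := w.2
  exact (smul_eq_zero.mp this).resolve_right hw0'

end Module.End

theorem Matrix.eq_zero_of_forall_dotProduct_eq_zero {n K : Type*} [Fintype n] [Field K]
    {s : Set (n → K)} (hs : Submodule.span K s = ⊤) {χ : n → K} (h : ∀ β ∈ s, β ⬝ᵥ χ = 0) :
    χ = 0 := by
  classical
  have hL : (dotProductBilin K K).flip χ = 0 := LinearMap.ext_on hs h
  funext j
  simpa using LinearMap.congr_fun hL (Pi.single j 1)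

/-- Pigeonhole: some `χ ∈ C` is orthogonal to `d` elements of `S`, which span `K^d`. -/
theorem Matrix.zero_mem_of_forall_exists_dotProduct_eq_zero {d : ℕ} {K : Type*} [Field K]
    {S C : Finset (Fin d → K)}
    (hind : ∀ T ⊆ S, T.card = d → LinearIndependent K (fun x : T ↦ (x : Fin d → K)))
    (hcard : C.card * (d - 1) < S.card) (h : ∀ α ∈ S, ∃ χ ∈ C, α ⬝ᵥ χ = 0) :
    0 ∈ C := by
  classical
  obtain ⟨χ, hχ, hfiber⟩ : ∃ χ ∈ C, d - 1 < #{α ∈ S | α ⬝ᵥ χ = 0} := by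
    by_contra! hle
    have hcover : S ⊆ C.biUnion fun χ ↦ {α ∈ S | α ⬝ᵥ χ = 0} := fun α hα ↦ by
      obtain ⟨χ, hχ, h0⟩ := h α hα
      exact mem_biUnion.mpr ⟨χ, hχ, mem_filter.mpr ⟨hα, h0⟩⟩
    have := (card_le_card hcover).trans (card_biUnion_le.trans (sum_le_card_nsmul _ _ _ hle))
    simp only [smul_eq_mul] at this
    omega
  obtain ⟨T, hTS, hTcard⟩ := exists_subset_card_eq (show d ≤ #{α ∈ S | α ⬝ᵥ χ = 0} by omega)
  have hspan : Submodule.span K (T : Set (Fin d → K)) = ⊤ := by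
    simpa using (hind T (hTS.trans (filter_subset _ _)) hTcard).span_eq_top_of_card_eq_finrank'
      (by simpa using hTcard)
  rwa [← eq_zero_of_forall_dotProduct_eq_zero hspan fun β hβ ↦ (mem_filter.mp (hTS hβ)).2]

/-- Lemma on joint eigenvalues with a smaller test set: if the determinant of
`∑ αⱼ Aⱼ` vanishes for all `α` in a set `S` of cardinality at least
`N(d-1)+1` whose `d`-element subsets are all linearly independent, then `0`
is a joint eigenvalue of the commuting tuple. -/
theorem stmt_2 (d N : ℕ)
    (A : Fin d → Matrix (Fin N) (Fin N) ℂ)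
    (hcomm : ∀ i j, Commute (A i) (A j))
    (S : Finset (Fin d → ℂ))
    (hcard : N * (d - 1) + 1 ≤ S.card)
    (hind : ∀ T : Finset (Fin d → ℂ), T ⊆ S → T.card = d →
      LinearIndependent ℂ (fun x : T => (x : Fin d → ℂ)))
    (hdet : ∀ α ∈ S, (∑ j, α j • A j).det = 0) :
    ∃ v : Fin N → ℂ, v ≠ 0 ∧ ∀ j, A j *ᵥ v = 0 := by
  set f : Fin d → Module.End ℂ (Fin N → ℂ) := fun j ↦ toLin' (A j)
  have hf : ∀ i j, Commute (f i) (f j) := fun i j ↦ (hcomm i j).map toLinAlgEquiv'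
  have hfin := Module.End.finite_jointEigenvalues hf
  have hS : ∀ α ∈ S, ∃ χ ∈ hfin.toFinset, α ⬝ᵥ χ = 0 := by
    intro α hα
    have hker : LinearMap.ker (∑ j, α j • f j) ≠ ⊥ := by
      obtain ⟨v, hv, hv0⟩ := exists_mulVec_eq_zero_iff.mpr (hdet α hα)
      refine (Submodule.ne_bot_iff _).mpr ⟨v, ?_, hv⟩
      simpa [f, ← map_smul, ← map_sum] using hv0
    simpa using Module.End.exists_mem_jointEigenvalues_dotProduct_eq_zero hf hker
  have hC : hfin.toFinset.card * (d - 1) < S.card := by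
    have := Module.End.ncard_jointEigenvalues_le hf
    rw [Set.ncard_eq_toFinset_card _ hfin, Module.finrank_fin_fun] at this
    nlinarith
  obtain ⟨v, hv, hv0⟩ := (Submodule.ne_bot_iff _).mp
    (hfin.mem_toFinset.mp (zero_mem_of_forall_exists_dotProduct_eq_zero hind hC hS))
  exact ⟨v, hv0, fun j ↦ by simpa [f] using Module.End.mem_jointEigenspace_iff.mp hv j⟩
end

section
/- Let (A_1,...,A_d) be a commuting tuple of N×N complex matrices. For each α = (α_1,...,α_d) ∈ ℂ^d, define the polynomial p_α(z_1,...,z_d) = det(α_1(A_1 − z_1 I) + α_2(A_2 − z_2 I) + ... + α_d(A_d − z_d I)). Then p_α(A_1,...,A_d) = 0 (the zero matrix) for every α ∈ ℂ^d. -/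
/-!
The matrix `∑ⱼ αⱼ (Aⱼ - zⱼ I)` equals `B - ⟨α, z⟩ I` with `B = ∑ⱼ αⱼ Aⱼ`, so
`p_α = (-1)^N χ_B(∑ⱼ αⱼ zⱼ)`, a one-variable polynomial composed with a linear form.
Since the `Aⱼ` commute, evaluation at `A` factors through the commutative algebra they
generate, where it is a ring homomorphism; it sends the linear form to `B`, so
`p_α(A) = (-1)^N χ_B(B) = 0` by the one-variable Cayley–Hamilton theorem.
-/

open Matrix

/-- Evaluation of a multivariate polynomial at a (commuting) tuple of elements
of a ℂ-algebra, substituting `T j` for the variable `j`. -/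
noncomputable def ncEval {d : ℕ} {A : Type*} [Ring A] [Algebra ℂ A]
    (p : MvPolynomial (Fin d) ℂ) (T : Fin d → A) : A :=
  Finsupp.sum (AddMonoidAlgebra.coeff p) fun m c => c • (List.ofFn fun j : Fin d => T j ^ m j).prod

open scoped IsMulCommutative

section ncEval

variable {d : ℕ} {A : Type*} [Ring A] [Algebra ℂ A]

theorem ncEval_algHom_comp {B : Type*} [CommRing B] [Algebra ℂ B] (f : B →ₐ[ℂ] A)
    (T : Fin d → B) (p : MvPolynomial (Fin d) ℂ) :
    ncEval p (fun j => f (T j)) = f (MvPolynomial.aeval T p) := by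
  induction p using MvPolynomial.induction_on' with
  | monomial m c =>
    rw [ncEval, MvPolynomial.sum_monomial_eq (by simp), MvPolynomial.aeval_monomial,
      _root_.map_mul, AlgHom.commutes, ← Algebra.smul_def, Finsupp.prod_pow, ← List.prod_ofFn,
      map_list_prod, List.map_ofFn]
    simp only [Function.comp_def, map_pow]
  | add p q hp hq =>
    rw [ncEval, AddMonoidAlgebra.coeff_add,
      Finsupp.sum_add_index (by simp) (fun _ _ _ _ => add_smul _ _ _), map_add, map_add,
      ← hp, ← hq]
    rfl

theorem ncEval_polynomial_aeval_linear {T : Fin d → A} (hT : ∀ i j, Commute (T i) (T j))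
    (α : Fin d → ℂ) (q : Polynomial ℂ) :
    ncEval (Polynomial.aeval (∑ j, MvPolynomial.C (α j) * MvPolynomial.X j) q) T =
      Polynomial.aeval (∑ j, α j • T j) q := by
  set S := Algebra.adjoin ℂ (Set.range T)
  have : IsMulCommutative S := Algebra.isMulCommutative_adjoin ℂ <| by
    rintro _ ⟨i, rfl⟩ _ ⟨j, rfl⟩
    exact hT i j
  let T' : Fin d → S := fun j => ⟨T j, Algebra.subset_adjoin ⟨j, rfl⟩⟩
  rw [show T = fun j => S.val (T' j) from rfl, ncEval_algHom_comp,
    ← Polynomial.aeval_algHom_apply, ← Polynomial.aeval_algHom_apply]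
  congr 1
  simp [Algebra.smul_def, T']

end ncEval

theorem Matrix.det_sub_smul_one {n R : Type*} [Fintype n] [DecidableEq n] [CommRing R]
    (M : Matrix n n R) (t : R) :
    (M - t • (1 : Matrix n n R)).det = (-1) ^ Fintype.card n * M.charpoly.eval t := by
  rw [eval_charpoly, ← det_neg, neg_sub, smul_one_eq_diagonal, scalar_apply]

/-- Multivariate Cayley–Hamilton: the polynomial
`p_α(z) = det (∑ⱼ αⱼ (Aⱼ - zⱼ I))` annihilates the commuting tuple `A`. -/
theorem stmt_3 (d N : ℕ)
    (A : Fin d → Matrix (Fin N) (Fin N) ℂ)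
    (hcomm : ∀ i j, Commute (A i) (A j))
    (α : Fin d → ℂ)
    (p : MvPolynomial (Fin d) ℂ)
    (hp : ∀ z : Fin d → ℂ,
      MvPolynomial.eval z p = (∑ j, α j • (A j - z j • (1 : Matrix (Fin N) (Fin N) ℂ))).det) :
    ncEval p A = 0 := by
  set B := ∑ j, α j • A j
  have hp_eq : p = Polynomial.aeval (∑ j, MvPolynomial.C (α j) * MvPolynomial.X j)
      (Polynomial.C ((-1) ^ N) * B.charpoly) := by
    refine MvPolynomial.funext fun z => ?_
    have hsum : ∑ j, α j • (A j - z j • (1 : Matrix (Fin N) (Fin N) ℂ)) =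
        B - (∑ j, α j * z j) • 1 := by
      simp only [smul_sub, Finset.sum_sub_distrib, smul_smul, Finset.sum_smul, B]
    rw [hp, hsum, det_sub_smul_one, Polynomial.aeval_def, Polynomial.hom_eval₂]
    simp [MvPolynomial.eval, MvPolynomial.eval₂Hom_comp_C]
  rw [hp_eq, ncEval_polynomial_aeval_linear hcomm, map_mul, Polynomial.aeval_C,
    aeval_self_charpoly, mul_zero]
end

section
/- Let (A_1,...,A_d) be a commuting tuple of N×N complex matrices. A point λ = (λ_1,...,λ_d) ∈ ℂ^d is a joint eigenvalue of (A_1,...,A_d) if and only if det(α_1(A_1 − λ_1 I) + ... + α_d(A_d − λ_d I)) = 0 for all α = (α_1,...,α_d) ∈ ℂ^d. -/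
/-!
Put `B j = A j - λ j • 1`; the claim is that commuting endomorphisms `B j` of a
finite-dimensional space over an infinite field have a common kernel vector as soon as every
linear combination `∑ α j • B j` is singular. Induct on the dimension. If all `B j` are
nilpotent, commuting nilpotents have a common kernel vector. Otherwise some `B k` is not
nilpotent, and its generalized kernel `W = ker (B k ^ dim V)` is a proper subspace, invariant under
every `B j`, modulo which `B k` is injective. The polynomial `α ↦ det (∑ α j • B j)` factors as
the product of the corresponding polynomials on `W` and on `V ⧸ W`; the second is nonzero at
`α = e_k`, so the first vanishes identically and the induction hypothesis applies to `W`.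
-/

open Matrix Module LinearMap

namespace Module.End

section Semiring

variable {R M : Type*} [Semiring R] [AddCommMonoid M] [Module R M]

lemma ker_le_comap_ker_of_commute {f g : End R M} (h : Commute f g) :
    ker f ≤ (ker f).comap g := fun x hx => by
  rw [Submodule.mem_comap, mem_ker, ← mul_apply, h.eq, mul_apply, mem_ker.1 hx, map_zero]

lemma inf_ker_ne_bot_of_isNilpotent {f : End R M} (hf : IsNilpotent f) {P : Submodule R M}
    (hP : P ≠ ⊥) (hPf : P ≤ P.comap f) : P ⊓ ker f ≠ ⊥ := by
  intro h
  have hinj : ∀ x ∈ P, f x = 0 → x = 0 := fun x hx hfx =>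
    (Submodule.mem_bot R).1 (h ▸ ⟨hx, hfx⟩)
  have hpow_inj : ∀ k, ∀ x ∈ P, (f ^ k) x = 0 → x = 0 := by
    intro k
    induction k with
    | zero => simp
    | succ k ih =>
      intro x hx hkx
      rw [pow_succ, mul_apply] at hkx
      exact hinj x hx (ih (f x) (hPf hx) hkx)
  obtain ⟨n, hn⟩ := hf
  obtain ⟨x, hx, hx0⟩ := P.ne_bot_iff.1 hP
  exact hx0 (hpow_inj n x hx (by simp [hn]))

theorem iInf_ker_ne_bot_of_isNilpotent [Nontrivial M] {ι : Type*} [Finite ι]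
    (B : ι → End R M) (hcomm : ∀ i j, Commute (B i) (B j)) (hnil : ∀ j, IsNilpotent (B j)) :
    ⨅ j, ker (B j) ≠ ⊥ := by
  classical
  cases nonempty_fintype ι
  suffices ∀ s : Finset ι, ⨅ j ∈ s, ker (B j) ≠ ⊥ by simpa using this Finset.univ
  intro s
  induction s using Finset.induction_on with
  | empty => simp
  | insert i s _ ih =>
    rw [Finset.iInf_insert, inf_comm]
    refine inf_ker_ne_bot_of_isNilpotent (hnil i) ih fun x hx => ?_
    simp only [Submodule.mem_comap, Submodule.mem_iInf] at hx ⊢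
    exact fun j hj => ker_le_comap_ker_of_commute (hcomm j i) (hx j hj)

end Semiring

theorem exists_mvPolynomial_eval_eq_det_sum_smul {R M : Type*} [CommRing R] [AddCommGroup M]
    [Module R M] [Module.Free R M] [Module.Finite R M] {ι : Type*} [Fintype ι] (B : ι → End R M) :
    ∃ p : MvPolynomial ι R, ∀ α : ι → R,
      MvPolynomial.eval α p = LinearMap.det (∑ j, α j • B j) := by
  classical
  let b := Module.Free.chooseBasis R M
  refine ⟨(∑ j, (MvPolynomial.X j : MvPolynomial ι R) •
      (toMatrix b b (B j)).map MvPolynomial.C).det, fun α => ?_⟩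
  rw [← det_toMatrix b, RingHom.map_det, map_sum]
  congr 1
  ext
  simp [Matrix.sum_apply]

end Module.End

namespace Submodule

variable {R M : Type*} [CommRing R] [AddCommGroup M] [Module R M] {ι : Type*} [Fintype ι]
  {B : ι → Module.End R M} {W : Submodule R M}

lemma le_comap_sum_smul (hW : ∀ j, W ≤ W.comap (B j)) (α : ι → R) :
    W ≤ W.comap (∑ j, α j • B j) := fun x hx => by
  simpa [LinearMap.sum_apply] using W.sum_mem fun j _ => W.smul_mem (α j) (hW j hx)

lemma restrict_sum_smul (hW : ∀ j, W ≤ W.comap (B j)) (α : ι → R) :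
    (∑ j, α j • B j).restrict (le_comap_sum_smul hW α) = ∑ j, α j • (B j).restrict (hW j) := by
  ext
  simp [LinearMap.sum_apply]

lemma mapQ_sum_smul (hW : ∀ j, W ≤ W.comap (B j)) (α : ι → R) :
    W.mapQ W (∑ j, α j • B j) (le_comap_sum_smul hW α) = ∑ j, α j • W.mapQ W (B j) (hW j) := by
  ext
  simp only [LinearMap.comp_apply, mkQ_apply, mapQ_apply, LinearMap.sum_apply,
    LinearMap.smul_apply]
  rw [← W.mkQ_apply, map_sum]
  simp

end Submodule

section Field

variable {K V : Type*} [Field K] [Infinite K] [AddCommGroup V] [Module K V]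
  [FiniteDimensional K V] {ι : Type*} [Fintype ι]

theorem Submodule.det_sum_smul_restrict_eq_zero {B : ι → Module.End K V} {W : Submodule K V}
    (hW : ∀ j, W ≤ W.comap (B j)) (hdet : ∀ α : ι → K, LinearMap.det (∑ j, α j • B j) = 0)
    {α₀ : ι → K} (hα₀ : LinearMap.det (∑ j, α₀ j • W.mapQ W (B j) (hW j)) ≠ 0) (α : ι → K) :
    LinearMap.det (∑ j, α j • (B j).restrict (hW j)) = 0 := by
  obtain ⟨p, hp⟩ :=
    Module.End.exists_mvPolynomial_eval_eq_det_sum_smul fun j => (B j).restrict (hW j)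
  obtain ⟨q, hq⟩ :=
    Module.End.exists_mvPolynomial_eval_eq_det_sum_smul fun j => W.mapQ W (B j) (hW j)
  have hpq : p * q = 0 := MvPolynomial.funext fun α => by
    rw [map_mul, hp, hq, map_zero, ← restrict_sum_smul hW, ← mapQ_sum_smul hW,
      ← LinearMap.det_eq_det_mul_det, hdet]
  have hq0 : q ≠ 0 := fun h => hα₀ (by rw [← hq, h, map_zero])
  rw [← hp, (mul_eq_zero.1 hpq).resolve_right hq0, map_zero]

theorem Module.End.exists_ne_zero_forall_apply_eq_zero_of_forall_det_eq_zero
    (B : ι → Module.End K V) (hcomm : ∀ i j, Commute (B i) (B j))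
    (hdet : ∀ α : ι → K, LinearMap.det (∑ j, α j • B j) = 0) :
    ∃ v ≠ 0, ∀ j, B j v = 0 := by
  classical
  obtain ⟨n, hn⟩ : ∃ n, finrank K V = n := ⟨_, rfl⟩
  induction n using Nat.strong_induction_on generalizing V with
  | _ n ih =>
  by_cases hnil : ∀ j, IsNilpotent (B j)
  · have : Nontrivial V := finrank_pos_iff.1 (Nat.pos_of_ne_zero (by simpa using hdet 0))
    obtain ⟨v, hv, hv0⟩ :=
      (Submodule.ne_bot_iff _).1 (iInf_ker_ne_bot_of_isNilpotent B hcomm hnil)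
    exact ⟨v, hv0, fun j => by simpa using Submodule.mem_iInf _ |>.1 hv j⟩
  push Not at hnil
  obtain ⟨k, hk⟩ := hnil
  subst hn
  set W := LinearMap.ker (B k ^ finrank K V)
  have hW : ∀ j, W ≤ W.comap (B j) := fun j =>
    ker_le_comap_ker_of_commute ((hcomm k j).pow_left _)
  have hWtop : W ≠ ⊤ := fun h => hk ⟨_, LinearMap.ker_eq_top.1 h⟩
  have hQ : LinearMap.det (W.mapQ W (B k) (hW k)) ≠ 0 := by
    rw [Ne, LinearMap.det_eq_zero_iff_ker_ne_bot, not_not, LinearMap.ker_eq_bot']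
    rintro ⟨x⟩ hx
    simp only [Submodule.Quotient.quot_mk_eq_mk, Submodule.mapQ_apply,
      Submodule.Quotient.mk_eq_zero] at hx ⊢
    refine ker_pow_le_ker_pow_finrank (B k) (finrank K V + 1) ?_
    rwa [LinearMap.mem_ker, pow_succ, mul_apply]
  have hα₀ : LinearMap.det (∑ j, (Pi.single k 1 : ι → K) j • W.mapQ W (B j) (hW j)) ≠ 0 := by
    simpa [Pi.single_apply] using hQ
  obtain ⟨v, hv0, hv⟩ := ih (finrank K W) (Submodule.finrank_lt hWtop)
    (fun j => (B j).restrict (hW j)) (fun i j => LinearMap.restrict_commute (hcomm i j) _ _)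
    (Submodule.det_sum_smul_restrict_eq_zero hW hdet hα₀) rfl
  exact ⟨v, by simpa using hv0, fun j => by simpa using congrArg Subtype.val (hv j)⟩

theorem Module.End.exists_ne_zero_forall_apply_eq_zero_iff_forall_det_eq_zero
    (B : ι → Module.End K V) (hcomm : ∀ i j, Commute (B i) (B j)) :
    (∃ v ≠ 0, ∀ j, B j v = 0) ↔ ∀ α : ι → K, LinearMap.det (∑ j, α j • B j) = 0 := by
  refine ⟨fun ⟨v, hv0, hv⟩ α => ?_,
    exists_ne_zero_forall_apply_eq_zero_of_forall_det_eq_zero B hcomm⟩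
  rw [LinearMap.det_eq_zero_iff_ker_ne_bot, Submodule.ne_bot_iff]
  exact ⟨v, by simp [LinearMap.sum_apply, hv], hv0⟩

end Field

/-- A point `λ` is a joint eigenvalue of the commuting matrix tuple
`(A₁,…,A_d)` iff `det (∑ⱼ αⱼ (Aⱼ - λⱼ I)) = 0` for all `α ∈ ℂᵈ`. -/
theorem stmt_4 (d N : ℕ)
    (A : Fin d → Matrix (Fin N) (Fin N) ℂ)
    (hcomm : ∀ i j, Commute (A i) (A j))
    (lam : Fin d → ℂ) :
    (∃ v : Fin N → ℂ, v ≠ 0 ∧ ∀ j, A j *ᵥ v = lam j • v) ↔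
      (∀ α : Fin d → ℂ,
        (∑ j, α j • (A j - lam j • (1 : Matrix (Fin N) (Fin N) ℂ))).det = 0) := by
  let B j := toLin' (A j - lam j • (1 : Matrix (Fin N) (Fin N) ℂ))
  have hBcomm : ∀ i j, Commute (B i) (B j) := fun i j =>
    (((hcomm i j).sub_right ((Commute.one_right _).smul_right _)).sub_left
      ((Commute.one_left _).smul_left _)).map toLinAlgEquiv'
  have hB : ∀ j v, B j v = 0 ↔ A j *ᵥ v = lam j • v := fun j v => by
    simp [B, sub_eq_zero]
  have hdet : ∀ α : Fin d → ℂ, LinearMap.det (∑ j, α j • B j) =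
      (∑ j, α j • (A j - lam j • (1 : Matrix (Fin N) (Fin N) ℂ))).det := fun α => by
    simp only [B, ← map_smul, ← map_sum, LinearMap.det_toLin']
  simpa only [hB, hdet] using
    Module.End.exists_ne_zero_forall_apply_eq_zero_iff_forall_det_eq_zero B hBcomm
end

section
/- (Phillips' theorem) Let X_0, X_1, ..., X_d and Y_0, Y_1, ..., Y_d be N×N complex matrices such that X_i X_j = X_j X_i for all i, j, and Y_0 X_0 + Y_1 X_1 + ... + Y_d X_d = 0. Define p(z_0, z_1, ..., z_d) = det(z_0 Y_0 + z_1 Y_1 + ... + z_d Y_d). Then p(X_0, X_1, ..., X_d) = 0. -/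
/-
Let `B` be the commutative subalgebra generated by the `Xⱼ` and `M = ∑ⱼ Xⱼ • Yⱼ`, a matrix over
`B`, so that `p(X) = det M`. Reading `∑ⱼ Yⱼ Xⱼ = 0` row by row, for each `i` the matrix units
`(Eᵢ₀, …, E_{i,N-1})` form a left null vector of `Mᵀ` over the matrix ring; multiplying by the
adjugate shows that `det M` annihilates every `E_{ib}`, hence `det M = 0`.
-/

open Matrix

theorem ncEval_eq_aeval {d : ℕ} {A : Type*} [CommRing A] [Algebra ℂ A]
    (p : MvPolynomial (Fin d) ℂ) (T : Fin d → A) :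
    ncEval p T = MvPolynomial.aeval T p := by
  rw [MvPolynomial.aeval_def, MvPolynomial.eval₂_eq', ncEval, Finsupp.sum]
  refine Finset.sum_congr rfl fun m _ => ?_
  rw [List.prod_ofFn, Algebra.smul_def]
  rfl

theorem AlgHom.map_ncEval {d : ℕ} {A B : Type*} [Ring A] [Algebra ℂ A] [Ring B] [Algebra ℂ B]
    (f : A →ₐ[ℂ] B) (p : MvPolynomial (Fin d) ℂ) (T : Fin d → A) :
    f (ncEval p T) = ncEval p (fun j => f (T j)) := by
  rw [ncEval, map_finsuppSum, ncEval]
  refine Finsupp.sum_congr fun m _ => ?_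
  simp only [_root_.map_smul, map_list_prod, List.map_ofFn, Function.comp_def, map_pow]

theorem MvPolynomial.aeval_eq_det_of_eval_eq_det {σ n K B : Type*} [Fintype σ] [Fintype n]
    [DecidableEq n] [CommRing K] [IsDomain K] [Infinite K] [CommRing B] [Algebra K B]
    (Y : σ → Matrix n n K) (p : MvPolynomial σ K)
    (hp : ∀ z : σ → K, eval z p = (∑ j, z j • Y j).det) (t : σ → B) :
    aeval t p = (∑ j, t j • (Y j).map (algebraMap K B)).det := by
  have hp_det : p = (∑ j, (X j : MvPolynomial σ K) • (Y j).map C).det := by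
    refine funext fun z => ?_
    rw [hp, RingHom.map_det]
    congr 1
    ext a b
    simp [Matrix.sum_apply]
  rw [hp_det, AlgHom.map_det]
  congr 1
  ext a b
  simp [Matrix.sum_apply]

theorem mul_map_det_eq_zero_of_vecMul_eq_zero {n A B : Type*} [Fintype n] [DecidableEq n]
    [Ring A] [CommRing B] (f : B →+* A) (M : Matrix n n B) (v : n → A)
    (hv : v ᵥ* M.map f = 0) (i : n) :
    v i * f M.det = 0 := by
  have h : v ᵥ* (M * M.adjugate).map f = 0 := by
    rw [Matrix.map_mul, ← Matrix.vecMul_vecMul, hv, Matrix.zero_vecMul]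
  rw [Matrix.mul_adjugate, Matrix.smul_one_eq_diagonal, Matrix.diagonal_map (map_zero f)] at h
  simpa [Matrix.vecMul_diagonal] using congrFun h i

theorem Matrix.single_one_mul_eq_sum {l m n α : Type*} [Fintype m] [Fintype n] [DecidableEq l]
    [DecidableEq m] [DecidableEq n] [Semiring α] (i : l) (a : m) (Y : Matrix m n α) :
    single i a (1 : α) * Y = ∑ b, Y a b • single i b 1 := by
  ext r c
  by_cases hr : r = i
  · subst hr; simp [Matrix.sum_apply, Matrix.single_apply]
  · simp [Matrix.sum_apply, hr, Ne.symm hr]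

theorem AlgHom.map_det_sum_smul_eq_zero {σ n K B : Type*} [Fintype σ] [Fintype n]
    [DecidableEq n] [CommRing K] [CommRing B] [Algebra K B]
    (f : B →ₐ[K] Matrix n n K) (Y : σ → Matrix n n K) (t : σ → B)
    (hYt : ∑ j, Y j * f (t j) = 0) :
    f (∑ j, t j • (Y j).map (algebraMap K B)).det = 0 := by
  set M := ∑ j, t j • (Y j).map (algebraMap K B)
  have hv : ∀ i, (fun b => single i b (1 : K)) ᵥ* Mᵀ.map f = 0 := by
    intro i
    funext a
    have hM : ∀ b, f (M a b) = ∑ j, Y j a b • f (t j) := by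
      simp [M, Matrix.sum_apply, Algebra.smul_def (Y _ a _), Algebra.commutes]
    calc ∑ b, single i b 1 * f (M a b)
        = ∑ j, (∑ b, Y j a b • single i b 1) * f (t j) := by
          simp only [hM, Finset.mul_sum, Finset.sum_mul, mul_smul_comm, smul_mul_assoc]
          exact Finset.sum_comm
      _ = single i a 1 * ∑ j, Y j * f (t j) := by
          simp only [← single_one_mul_eq_sum, Finset.mul_sum, ← mul_assoc]
      _ = 0 := by rw [hYt, mul_zero]
  ext b c
  have h := mul_map_det_eq_zero_of_vecMul_eq_zero (f : B →+* Matrix n n K) Mᵀ _ (hv b) b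
  simpa [Matrix.det_transpose] using congrFun (congrFun h b) c

/-- Phillips' theorem: if the `Xᵢ` commute pairwise and
`∑ⱼ Yⱼ Xⱼ = 0`, then `p(z) = det (∑ⱼ zⱼ Yⱼ)` annihilates `(X₀,…,X_d)`. -/
theorem stmt_5 (d N : ℕ)
    (X Y : Fin (d + 1) → Matrix (Fin N) (Fin N) ℂ)
    (hcomm : ∀ i j, Commute (X i) (X j))
    (hXY : ∑ j, Y j * X j = 0)
    (p : MvPolynomial (Fin (d + 1)) ℂ)
    (hp : ∀ z : Fin (d + 1) → ℂ,
      MvPolynomial.eval z p = (∑ j, z j • Y j).det) :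
    ncEval p X = 0 := by
  let B := Algebra.adjoin ℂ (Set.range X)
  have : IsMulCommutative B := Algebra.isMulCommutative_adjoin ℂ <| by
    rintro _ ⟨i, rfl⟩ _ ⟨j, rfl⟩
    exact hcomm i j
  open scoped IsMulCommutative in
  let _ : CommRing B := inferInstance
  let t : Fin (d + 1) → B := fun j => ⟨X j, Algebra.subset_adjoin ⟨j, rfl⟩⟩
  calc ncEval p X = B.val (ncEval p t) := (B.val.map_ncEval p t).symm
    _ = B.val (∑ j, t j • (Y j).map (algebraMap ℂ B)).det := by
      rw [ncEval_eq_aeval, MvPolynomial.aeval_eq_det_of_eval_eq_det Y p hp]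
    _ = 0 := B.val.map_det_sum_smul_eq_zero Y t hXY
end

section
/- Let P ≠ I be an orthogonal projection and U a unitary on ℂ^N, and define φ_1(z) = P^⊥U + zPU, φ_2(z) = U^*P + zU^*P^⊥. Suppose (λ_1, λ_2) ∈ ℂ² with λ_1 ≠ 0 and λ_1 is an eigenvalue of φ_1(λ_1λ_2). Then (λ_1, λ_2) is a joint eigenvalue of (φ_1(λ_1λ_2), φ_2(λ_1λ_2)): there exists a nonzero x with φ_1(λ_1λ_2)x = λ_1 x and φ_2(λ_1λ_2)x = λ_2 x. -/
open Matrix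

/-- For the BCL pair `φ₁(z) = P^⊥U + zPU`, `φ₂(z) = U*P + zU*P^⊥` with
`P ≠ I`, if `λ₁ ≠ 0` is an eigenvalue of `φ₁(λ₁λ₂)`, then `(λ₁, λ₂)` is a
joint eigenvalue of `(φ₁(λ₁λ₂), φ₂(λ₁λ₂))`. -/
theorem stmt_12 (N : ℕ) (P U : Matrix (Fin N) (Fin N) ℂ)
    (hP_herm : Pᴴ = P) (hP_idem : P * P = P) (hP_ne : P ≠ 1)
    (hU₁ : U * Uᴴ = 1) (hU₂ : Uᴴ * U = 1)
    (φ₁ φ₂ : ℂ → Matrix (Fin N) (Fin N) ℂ)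
    (hφ₁ : ∀ z, φ₁ z = (1 - P) * U + z • (P * U))
    (hφ₂ : ∀ z, φ₂ z = Uᴴ * P + z • (Uᴴ * (1 - P)))
    (lam₁ lam₂ : ℂ) (hlam₁ : lam₁ ≠ 0)
    (heig : ∃ x : Fin N → ℂ, x ≠ 0 ∧ φ₁ (lam₁ * lam₂) *ᵥ x = lam₁ • x) :
    ∃ x : Fin N → ℂ, x ≠ 0 ∧
      φ₁ (lam₁ * lam₂) *ᵥ x = lam₁ • x ∧ φ₂ (lam₁ * lam₂) *ᵥ x = lam₂ • x := by
  obtain ⟨x, hx, hx1⟩ := heig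
  refine ⟨x, hx, hx1, ?_⟩
  have key : ∀ z : ℂ, φ₂ z * φ₁ z = z • 1 := by
    intro z
    have hQ : (1 - P) * (1 - P) = 1 - P := by
      rw [Matrix.sub_mul, Matrix.one_mul, Matrix.mul_sub, Matrix.mul_one, hP_idem]; abel
    have hPQ : P * (1 - P) = 0 := by
      rw [Matrix.mul_sub, Matrix.mul_one, hP_idem]; abel
    have hQP : (1 - P) * P = 0 := by
      rw [Matrix.sub_mul, Matrix.one_mul, hP_idem]; abel
    have expand : φ₂ z * φ₁ z = Uᴴ * (P * (1 - P)) * U + z • (Uᴴ * (P * P) * U)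
        + z • (Uᴴ * ((1 - P) * (1 - P)) * U) + (z * z) • (Uᴴ * ((1 - P) * P) * U) := by
      rw [hφ₁, hφ₂]
      simp only [Matrix.mul_add, Matrix.add_mul, Matrix.smul_mul, Matrix.mul_smul,
        smul_add, smul_smul, Matrix.mul_assoc]
      abel
    rw [expand, hQ, hPQ, hQP, hP_idem]
    simp only [Matrix.mul_zero, Matrix.zero_mul, smul_zero, zero_add, add_zero, ← smul_add]
    rw [show Uᴴ * P * U + Uᴴ * (1 - P) * U = Uᴴ * (P + (1 - P)) * U by noncomm_ring]
    simp [hU₂]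
  have hcomp : φ₂ (lam₁ * lam₂) *ᵥ (φ₁ (lam₁ * lam₂) *ᵥ x) = (lam₁ * lam₂) • x := by
    rw [Matrix.mulVec_mulVec, key, Matrix.smul_mulVec, Matrix.one_mulVec]
  rw [hx1, Matrix.mulVec_smul] at hcomp
  have : lam₁ • (φ₂ (lam₁ * lam₂) *ᵥ x) = lam₁ • (lam₂ • x) := by
    rw [hcomp, smul_smul]
  exact smul_right_injective _ hlam₁ this
end
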